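/- Let r > 0 and define λ_max(θ) = r + |cos θ| if |cos θ| ≥ (√(4 + r²) − r)/2 and λ_max(θ) = √(1 + (r/sin θ)²) otherwise. Then λ_max(θ) ≤ 1 + r for all θ ∈ ℝ, with equality if and only if |cos θ| = 1. Consequently, sup over θ ∈ ℝ of λ_max(θ) equals 1 + r, attained at θ = 0 (and at the other multiples of π). -/
import Mathlib


noncomputable section

/-- `λ_max(θ) = r + |cos θ|` if `|cos θ| ≥ (√(4 + r²) − r)/2`,
and `λ_max(θ) = √(1 + (r/sin θ)²)` otherwise. -/
def lambdaMax (r θ : ℝ) : ℝ :=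
  if (Real.sqrt (4 + r ^ 2) - r) / 2 ≤ |Real.cos θ| then r + |Real.cos θ|
  else Real.sqrt (1 + (r / Real.sin θ) ^ 2)

lemma lambdaMax_key (r : ℝ) (hr : 0 < r) (θ : ℝ) :
    lambdaMax r θ ≤ 1 + r ∧ (lambdaMax r θ = 1 + r ↔ |Real.cos θ| = 1) := by
  set c := |Real.cos θ| with hc
  have hc0 : 0 ≤ c := abs_nonneg _
  have hc1 : c ≤ 1 := Real.abs_cos_le_one θ
  set s := Real.sqrt (4 + r ^ 2) with hs
  have hs2 : s ^ 2 = 4 + r ^ 2 := Real.sq_sqrt (by positivity)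
  have hs0 : 0 ≤ s := Real.sqrt_nonneg _
  set t := (s - r) / 2 with ht
  have htr : t ^ 2 + r * t = 1 := by
    rw [ht]; nlinarith [hs2]
  have ht1 : t < 1 := by
    have hslt : s < 2 + r := by
      rw [hs]
      rw [show (2:ℝ) + r = Real.sqrt ((2 + r) ^ 2) from (Real.sqrt_sq (by linarith)).symm]
      apply Real.sqrt_lt_sqrt (by positivity)
      nlinarith
    rw [ht]; linarith
  have ht0 : 0 < t := by nlinarith
  unfold lambdaMax
  rw [← hc, ← hs, ← ht]
  by_cases h : t ≤ c
  · rw [if_pos h]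
    constructor
    · linarith
    · constructor <;> intro h' <;> linarith
  · rw [if_neg h]
    push_neg at h
    have hcne : c < 1 := lt_of_lt_of_le h ht1.le
    have hsin : Real.sin θ ≠ 0 := by
      intro h0
      have := Real.sin_sq_add_cos_sq θ
      rw [h0] at this
      have : Real.cos θ ^ 2 = 1 := by nlinarith
      have : c ^ 2 = 1 := by rw [hc, sq_abs]; exact this
      nlinarith
    have hS2 : Real.sin θ ^ 2 = 1 - c ^ 2 := by
      have := Real.sin_sq_add_cos_sq θ
      rw [hc, sq_abs]; linarith
    have hS2pos : 0 < Real.sin θ ^ 2 := by positivity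
    have hlt : Real.sqrt (1 + (r / Real.sin θ) ^ 2) < 1 + r := by
      rw [show Real.sqrt (1 + (r / Real.sin θ) ^ 2) < 1 + r ↔
          1 + (r / Real.sin θ) ^ 2 < (1 + r) ^ 2 from Real.sqrt_lt' (by linarith)]
      have hrt : r * t = 1 - t ^ 2 := by linarith
      have h1 : r * t ^ 2 = (1 - t ^ 2) * t := by
        rw [← hrt]; ring
      have h2 : (2 + r) * t ^ 2 < 2 := by
        nlinarith [h1, mul_pos (show (0:ℝ) < 2 - t by linarith)
          (show (0:ℝ) < 1 - t ^ 2 by nlinarith)]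
      have hct : c ^ 2 ≤ t ^ 2 := by nlinarith
      have hc2 : (2 + r) * c ^ 2 < 2 := by nlinarith
      have hdiv : r ^ 2 / Real.sin θ ^ 2 < 2 * r + r ^ 2 := by
        rw [div_lt_iff₀ hS2pos]; nlinarith [hS2]
      rw [div_pow]; nlinarith [hdiv]
    refine ⟨hlt.le, ?_⟩
    constructor
    · intro h'; exact absurd h' hlt.ne
    · intro h'; exact absurd h' hcne.ne

/-- For `r > 0`: `λ_max(θ) ≤ 1 + r` for all `θ`, with equality iff `|cos θ| = 1`;
consequently the supremum of `λ_max` over `θ ∈ ℝ` is `1 + r`, attained at `θ = 0`. -/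
theorem lambdaMax_le_one_add (r : ℝ) (hr : 0 < r) :
    (∀ θ : ℝ, lambdaMax r θ ≤ 1 + r ∧ (lambdaMax r θ = 1 + r ↔ |Real.cos θ| = 1)) ∧
    sSup (Set.range (lambdaMax r)) = 1 + r ∧ lambdaMax r 0 = 1 + r := by
  have key := lambdaMax_key r hr
  have h0 : lambdaMax r 0 = 1 + r := by
    rw [(key 0).2]
    simp
  refine ⟨key, ?_, h0⟩
  apply le_antisymm
  · apply Real.sSup_le
    · rintro x ⟨θ, rfl⟩; exact (key θ).1
    · linarith
  · rw [← h0]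
    refine le_csSup ⟨1 + r, ?_⟩ ⟨0, rfl⟩
    rintro x ⟨θ, rfl⟩; exact (key θ).1
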